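/- Fix τ ∈ (0,1). If y < y*_τ, then y < f(y) ≤ y*_τ. -/

import Mathlib

open MeasureTheory ProbabilityTheory Filter Set

noncomputable section

/-- sign function: `1` if `0 ≤ x`, `−1` otherwise. -/
def sgn (x : ℝ) : ℝ := if 0 ≤ x then 1 else -1

/-- `pr^π(Y ≤ y)`, the CDF of the outcome induced by the regime `(π₁, π₂)`:
`∫∫ F_ε(y − m(h₂) − π₂(h₂) c(h₂)) κ((h₁, π₁(h₁)), dh₂) μ(dh₁)`. -/
def prPi {X1 X2 : Type*} [MeasurableSpace X1] [MeasurableSpace X2]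
    (μ : Measure X1) (κ : Kernel (X1 × ℝ) X2) (m c : X2 → ℝ) (Feps : ℝ → ℝ)
    (π₁ : X1 → ℝ) (π₂ : X2 → ℝ) (y : ℝ) : ℝ :=
  ∫ h₁, (∫ h₂, Feps (y - m h₂ - π₂ h₂ * c h₂) ∂(κ (h₁, π₁ h₁))) ∂μ

/-- `I(y, F, G) = ∫ F(y − u − |v|) dG(u,v)`. -/
def Ifun (y : ℝ) (F : ℝ → ℝ) (G : Measure (ℝ × ℝ)) : ℝ :=
  ∫ p, F (y - p.1 - |p.2|) ∂G

/-- `G(·,· | h₁, a₁)`: the pushforward of `κ((h₁,a₁),·)` under `h₂ ↦ (m h₂, c h₂)`. -/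
def Gdist {X1 X2 : Type*} [MeasurableSpace X1] [MeasurableSpace X2]
    (κ : Kernel (X1 × ℝ) X2) (m c : X2 → ℝ) (h₁ : X1) (a₁ : ℝ) : Measure (ℝ × ℝ) :=
  (κ (h₁, a₁)).map (fun h₂ => (m h₂, c h₂))

/-- `d(h₁, y) = I(y, F_ε, G(·,·|h₁,−1)) − I(y, F_ε, G(·,·|h₁,1))`. -/
def dfun {X1 X2 : Type*} [MeasurableSpace X1] [MeasurableSpace X2]
    (κ : Kernel (X1 × ℝ) X2) (m c : X2 → ℝ) (Feps : ℝ → ℝ) (h₁ : X1) (y : ℝ) : ℝ :=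
  Ifun y Feps (Gdist κ m c h₁ (-1)) - Ifun y Feps (Gdist κ m c h₁ 1)

/-- `Γ(h₁, y) = sgn(d(h₁, y))`. -/
def Gam {X1 X2 : Type*} [MeasurableSpace X1] [MeasurableSpace X2]
    (κ : Kernel (X1 × ℝ) X2) (m c : X2 → ℝ) (Feps : ℝ → ℝ) (h₁ : X1) (y : ℝ) : ℝ :=
  sgn (dfun κ m c Feps h₁ y)

/-- `q^π(τ) = inf{y : pr^π(Y ≤ y) ≥ τ}`. -/
def quant {X1 X2 : Type*} [MeasurableSpace X1] [MeasurableSpace X2]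
    (μ : Measure X1) (κ : Kernel (X1 × ℝ) X2) (m c : X2 → ℝ) (Feps : ℝ → ℝ)
    (τ : ℝ) (π₁ : X1 → ℝ) (π₂ : X2 → ℝ) : ℝ :=
  sInf {y : ℝ | τ ≤ prPi μ κ m c Feps π₁ π₂ y}

/-- `y*_τ = inf{y : pr^{(Γ(·,y), π₂*)}(Y ≤ y) ≥ τ}` where `π₂*(h₂) = sgn(c(h₂))`. -/
def ystar {X1 X2 : Type*} [MeasurableSpace X1] [MeasurableSpace X2]
    (μ : Measure X1) (κ : Kernel (X1 × ℝ) X2) (m c : X2 → ℝ) (Feps : ℝ → ℝ)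
    (τ : ℝ) : ℝ :=
  sInf {y : ℝ |
    τ ≤ prPi μ κ m c Feps (fun h₁ => Gam κ m c Feps h₁ y) (fun h₂ => sgn (c h₂)) y}

/-- `f(y) = q^{(Γ(·,y), π₂*)}(τ)`. -/
def fQIQ {X1 X2 : Type*} [MeasurableSpace X1] [MeasurableSpace X2]
    (μ : Measure X1) (κ : Kernel (X1 × ℝ) X2) (m c : X2 → ℝ) (Feps : ℝ → ℝ)
    (τ : ℝ) (y : ℝ) : ℝ :=
  quant μ κ m c Feps τ (fun h₁ => Gam κ m c Feps h₁ y) (fun h₂ => sgn (c h₂))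

/-! Under `π₂*` the outcome CDF of a regime is a `μ`-mixture of the second-stage CDFs
`z ↦ ∫ F_ε(z − m − |c|) dκ(h₁, a)`, and mixtures and minima of CDFs are CDFs. Since `Γ(·, w)`
picks the treatment whose CDF is smaller at `w`, the function `D(z)` := (CDF of `Γ(·, z)` at `z`)
is the mixture of the pointwise minima, hence a CDF with `τ`-quantile `y*_τ`, and `D ≤ P` with
equality at `y`, where `P` is the CDF of `Γ(·, y)`, whose `τ`-quantile is `f(y)`. The Galois
connection `q_G(τ) ≤ z ↔ τ ≤ G z` of a CDF turns `y < y*_τ` into `P y = D y < τ`, i.e.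
`y < f(y)`, and `D ≤ P` gives `f(y) ≤ y*_τ`. -/

open scoped Topology

structure IsCDF (F : ℝ → ℝ) : Prop where
  mono : Monotone F
  continuousWithinAt_Ici : ∀ x, ContinuousWithinAt F (Ici x) x
  tendsto_atBot : Tendsto F atBot (𝓝 0)
  tendsto_atTop : Tendsto F atTop (𝓝 1)

lemma integrable_of_mem_Icc {α : Type*} [MeasurableSpace α] {ν : Measure α} [IsFiniteMeasure ν]
    {f : α → ℝ} (hf : AEStronglyMeasurable f ν) (h01 : ∀ x, f x ∈ Icc (0 : ℝ) 1) :
    Integrable f ν :=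
  .of_bound hf 1 <| ae_of_all _ fun x => abs_le.2 ⟨by linarith [(h01 x).1], (h01 x).2⟩

lemma tendsto_integral_of_mem_Icc {α ι : Type*} [MeasurableSpace α] {ν : Measure α}
    [IsFiniteMeasure ν] {l : Filter ι} [l.IsCountablyGenerated] {f : ι → α → ℝ} {g : α → ℝ}
    (hf : ∀ i, AEStronglyMeasurable (f i) ν) (h01 : ∀ i x, f i x ∈ Icc (0 : ℝ) 1)
    (hlim : ∀ x, Tendsto (fun i => f i x) l (𝓝 (g x))) :
    Tendsto (fun i => ∫ x, f i x ∂ν) l (𝓝 (∫ x, g x ∂ν)) :=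
  tendsto_integral_filter_of_dominated_convergence (fun _ => 1) (.of_forall hf)
    (.of_forall fun i => ae_of_all _ fun x => abs_le.2 ⟨by linarith [(h01 i x).1], (h01 i x).2⟩)
    (integrable_const 1) (ae_of_all _ hlim)

namespace IsCDF

variable {F G : ℝ → ℝ}

lemma mem_Icc (hF : IsCDF F) (x : ℝ) : F x ∈ Icc (0 : ℝ) 1 :=
  ⟨hF.mono.le_of_tendsto hF.tendsto_atBot x, hF.mono.ge_of_tendsto hF.tendsto_atTop x⟩

lemma comp_sub_const (hF : IsCDF F) (b : ℝ) : IsCDF fun z => F (z - b) where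
  mono _ _ h := hF.mono (sub_le_sub_right h b)
  continuousWithinAt_Ici x :=
    (hF.continuousWithinAt_Ici (x - b)).comp (f := fun z => z - b)
      (continuous_sub_right b).continuousWithinAt
      fun _ hz => sub_le_sub_right hz b
  tendsto_atBot := hF.tendsto_atBot.comp (tendsto_atBot_add_const_right _ (-b) tendsto_id)
  tendsto_atTop := hF.tendsto_atTop.comp (tendsto_atTop_add_const_right _ (-b) tendsto_id)

lemma min (hF : IsCDF F) (hG : IsCDF G) : IsCDF fun z => min (F z) (G z) where
  mono := hF.mono.min hG.mono
  continuousWithinAt_Ici x := (hF.continuousWithinAt_Ici x).min (hG.continuousWithinAt_Ici x)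
  tendsto_atBot := by simpa using hF.tendsto_atBot.min hG.tendsto_atBot
  tendsto_atTop := by simpa using hF.tendsto_atTop.min hG.tendsto_atTop

lemma integral {α : Type*} [MeasurableSpace α] (ν : Measure α) [IsProbabilityMeasure ν]
    {Φ : α → ℝ → ℝ} (hΦ : ∀ x, IsCDF (Φ x)) (hmeas : ∀ z, Measurable fun x => Φ x z) :
    IsCDF fun z => ∫ x, Φ x z ∂ν := by
  have hint z : Integrable (fun x => Φ x z) ν :=
    integrable_of_mem_Icc (hmeas z).aestronglyMeasurable fun x => (hΦ x).mem_Icc z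
  have hlim {l : Filter ℝ} [l.IsCountablyGenerated] (L : α → ℝ)
      (h : ∀ x, Tendsto (Φ x) l (𝓝 (L x))) :
      Tendsto (fun z => ∫ x, Φ x z ∂ν) l (𝓝 (∫ x, L x ∂ν)) :=
    tendsto_integral_of_mem_Icc (fun z => (hmeas z).aestronglyMeasurable)
      (fun z x => (hΦ x).mem_Icc z) h
  refine ⟨fun z z' h => integral_mono (hint z) (hint z') fun x => (hΦ x).mono h,
    fun z => hlim _ fun x => (hΦ x).continuousWithinAt_Ici z, ?_, ?_⟩
  · simpa using hlim (fun _ => 0) fun x => (hΦ x).tendsto_atBot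
  · simpa using hlim (fun _ => 1) fun x => (hΦ x).tendsto_atTop

lemma csInf_le_iff (hF : IsCDF F) {τ : ℝ} (hτ : τ ∈ Ioo (0 : ℝ) 1) (y : ℝ) :
    sInf {z | τ ≤ F z} ≤ y ↔ τ ≤ F y := by
  set S := {z | τ ≤ F z}
  have hne : S.Nonempty := (hF.tendsto_atTop.eventually_const_le hτ.2).exists
  obtain ⟨b, hb⟩ := eventually_atBot.1 (hF.tendsto_atBot.eventually_lt_const hτ.1)
  have hbdd : BddBelow S := ⟨b, fun z hz => le_of_not_gt fun hzb => (hb z hzb.le).not_ge hz⟩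
  have hmem : τ ≤ F (sInf S) := by
    refine ge_of_tendsto ((hF.continuousWithinAt_Ici _).mono Ioi_subset_Ici_self) ?_
    filter_upwards [self_mem_nhdsWithin] with z hz
    obtain ⟨w, hwS, hwz⟩ := exists_lt_of_csInf_lt hne hz
    exact hwS.trans (hF.mono hwz.le)
  exact ⟨fun h => hmem.trans (hF.mono h), fun h => csInf_le hbdd h⟩

end IsCDF

lemma sgn_mul_self (x : ℝ) : sgn x * x = |x| := by
  unfold sgn
  split_ifs with hx
  · rw [abs_of_nonneg hx, one_mul]
  · rw [abs_of_neg (not_le.1 hx), neg_one_mul]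

section TwoStage

variable {X1 X2 : Type*} [MeasurableSpace X1] [MeasurableSpace X2]
  (μ : Measure X1) (κ : Kernel (X1 × ℝ) X2) (m c : X2 → ℝ) (F : ℝ → ℝ)

/-- The CDF of `Y` given `(H₁, A₁) = (h₁, a)` when the second stage follows `π₂*`. -/
def secondStageCdf (h₁ : X1) (a z : ℝ) : ℝ :=
  ∫ h₂, F (z - m h₂ - |c h₂|) ∂κ (h₁, a)

lemma prPi_sgn (π₁ : X1 → ℝ) (z : ℝ) :
    prPi μ κ m c F π₁ (fun h₂ => sgn (c h₂)) z =
      ∫ h₁, secondStageCdf κ m c F h₁ (π₁ h₁) z ∂μ := by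
  simp only [prPi, secondStageCdf, sgn_mul_self]

variable {κ m c F}

lemma isCDF_secondStageCdf [IsMarkovKernel κ] (hm : Measurable m) (hc : Measurable c)
    (hF : IsCDF F) (h₁ : X1) (a : ℝ) : IsCDF (secondStageCdf κ m c F h₁ a) := by
  unfold secondStageCdf
  simpa only [sub_sub] using IsCDF.integral (κ (h₁, a))
    (fun h₂ => hF.comp_sub_const (m h₂ + |c h₂|))
    (fun z => hF.mono.measurable.comp (measurable_const.sub (hm.add hc.abs)))

lemma measurable_secondStageCdf (hm : Measurable m) (hc : Measurable c) (hF : Measurable F)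
    (a z : ℝ) : Measurable fun h₁ => secondStageCdf κ m c F h₁ a z :=
  ((hF.comp ((measurable_const.sub hm).sub hc.abs)).stronglyMeasurable.integral_kernel
    (κ := κ)).measurable.comp measurable_prodMk_right

lemma Ifun_Gdist (hm : Measurable m) (hc : Measurable c) (hF : Measurable F) (h₁ : X1)
    (a z : ℝ) : Ifun z F (Gdist κ m c h₁ a) = secondStageCdf κ m c F h₁ a z :=
  integral_map (hm.prodMk hc).aemeasurable
    (hF.comp ((measurable_const.sub measurable_fst).sub measurable_snd.abs)).aestronglyMeasurable

lemma secondStageCdf_Gam (hm : Measurable m) (hc : Measurable c) (hF : Measurable F) (h₁ : X1)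
    (w : ℝ) : secondStageCdf κ m c F h₁ (Gam κ m c F h₁ w) =
      if secondStageCdf κ m c F h₁ 1 w ≤ secondStageCdf κ m c F h₁ (-1) w
      then secondStageCdf κ m c F h₁ 1 else secondStageCdf κ m c F h₁ (-1) := by
  simp only [Gam, sgn, dfun, Ifun_Gdist hm hc hF, sub_nonneg]
  split_ifs <;> rfl

lemma measurable_secondStageCdf_Gam (hm : Measurable m) (hc : Measurable c) (hF : Measurable F)
    (w z : ℝ) : Measurable fun h₁ => secondStageCdf κ m c F h₁ (Gam κ m c F h₁ w) z := by
  simp only [secondStageCdf_Gam hm hc hF, ite_apply]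
  exact .ite (measurableSet_le (measurable_secondStageCdf hm hc hF 1 w)
      (measurable_secondStageCdf hm hc hF (-1) w))
    (measurable_secondStageCdf hm hc hF 1 z) (measurable_secondStageCdf hm hc hF (-1) z)

lemma min_le_secondStageCdf_Gam (hm : Measurable m) (hc : Measurable c) (hF : Measurable F)
    (h₁ : X1) (w z : ℝ) :
    min (secondStageCdf κ m c F h₁ (-1) z) (secondStageCdf κ m c F h₁ 1 z) ≤
      secondStageCdf κ m c F h₁ (Gam κ m c F h₁ w) z := by
  rw [secondStageCdf_Gam hm hc hF]
  split_ifs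
  exacts [min_le_right _ _, min_le_left _ _]

lemma secondStageCdf_Gam_self (hm : Measurable m) (hc : Measurable c) (hF : Measurable F)
    (h₁ : X1) (z : ℝ) : secondStageCdf κ m c F h₁ (Gam κ m c F h₁ z) z =
      min (secondStageCdf κ m c F h₁ (-1) z) (secondStageCdf κ m c F h₁ 1 z) := by
  rw [secondStageCdf_Gam hm hc hF]
  split_ifs with h
  · exact (min_eq_right h).symm
  · exact (min_eq_left (not_le.1 h).le).symm

lemma prPi_Gam_self (hm : Measurable m) (hc : Measurable c) (hF : Measurable F) (z : ℝ) :
    prPi μ κ m c F (fun h₁ => Gam κ m c F h₁ z) (fun h₂ => sgn (c h₂)) z =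
      ∫ h₁, min (secondStageCdf κ m c F h₁ (-1) z) (secondStageCdf κ m c F h₁ 1 z) ∂μ := by
  simp only [prPi_sgn, secondStageCdf_Gam_self hm hc hF]

variable [IsProbabilityMeasure μ] [IsMarkovKernel κ]

lemma isCDF_prPi_Gam (hm : Measurable m) (hc : Measurable c) (hF : IsCDF F) (w : ℝ) :
    IsCDF (prPi μ κ m c F (fun h₁ => Gam κ m c F h₁ w) fun h₂ => sgn (c h₂)) := by
  rw [funext (prPi_sgn μ κ m c F _)]
  exact IsCDF.integral μ (fun h₁ => isCDF_secondStageCdf hm hc hF _ _)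
    (measurable_secondStageCdf_Gam hm hc hF.mono.measurable w)

lemma isCDF_integral_min_secondStageCdf (hm : Measurable m) (hc : Measurable c) (hF : IsCDF F) :
    IsCDF fun z =>
      ∫ h₁, min (secondStageCdf κ m c F h₁ (-1) z) (secondStageCdf κ m c F h₁ 1 z) ∂μ :=
  IsCDF.integral μ
    (fun h₁ => (isCDF_secondStageCdf hm hc hF h₁ (-1)).min (isCDF_secondStageCdf hm hc hF h₁ 1))
    fun z => (measurable_secondStageCdf hm hc hF.mono.measurable (-1) z).min
      (measurable_secondStageCdf hm hc hF.mono.measurable 1 z)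

lemma integral_min_secondStageCdf_le_prPi_Gam (hm : Measurable m) (hc : Measurable c)
    (hF : IsCDF F) (w z : ℝ) :
    ∫ h₁, min (secondStageCdf κ m c F h₁ (-1) z) (secondStageCdf κ m c F h₁ 1 z) ∂μ ≤
      prPi μ κ m c F (fun h₁ => Gam κ m c F h₁ w) (fun h₂ => sgn (c h₂)) z := by
  rw [prPi_sgn]
  have hmem (h₁ : X1) (a : ℝ) := (isCDF_secondStageCdf (κ := κ) hm hc hF h₁ a).mem_Icc z
  refine integral_mono_of_nonneg (.of_forall fun h₁ => le_min (hmem h₁ _).1 (hmem h₁ _).1)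
    (integrable_of_mem_Icc
      (measurable_secondStageCdf_Gam hm hc hF.mono.measurable w z).aestronglyMeasurable
      fun h₁ => hmem h₁ _)
    (.of_forall fun h₁ => min_le_secondStageCdf_Gam hm hc hF.mono.measurable h₁ w z)

end TwoStage

theorem stmt9_general
    {X1 X2 : Type*} [MeasurableSpace X1] [MeasurableSpace X2]
    (μ : Measure X1) [IsProbabilityMeasure μ]
    (κ : Kernel (X1 × ℝ) X2) [IsMarkovKernel κ]
    (m c : X2 → ℝ) (hm : Measurable m) (hc : Measurable c)
    (Feps : ℝ → ℝ) (hF_mono : Monotone Feps)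
    (hF_rc : ∀ x : ℝ, ContinuousWithinAt Feps (Ici x) x)
    (hF_bot : Tendsto Feps atBot (nhds 0)) (hF_top : Tendsto Feps atTop (nhds 1))
    (τ : ℝ) (hτ : τ ∈ Ioo (0:ℝ) 1) (y : ℝ) (hy : y < ystar μ κ m c Feps τ) :
    y < fQIQ μ κ m c Feps τ y ∧ fQIQ μ κ m c Feps τ y ≤ ystar μ κ m c Feps τ := by
  have hF : IsCDF Feps := ⟨hF_mono, hF_rc, hF_bot, hF_top⟩
  set D : ℝ → ℝ := fun z =>
    ∫ h₁, min (secondStageCdf κ m c Feps h₁ (-1) z) (secondStageCdf κ m c Feps h₁ 1 z) ∂μ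
  set P := prPi μ κ m c Feps (fun h₁ => Gam κ m c Feps h₁ y) fun h₂ => sgn (c h₂)
  have hD : IsCDF D := isCDF_integral_min_secondStageCdf μ hm hc hF
  have hP : IsCDF P := isCDF_prPi_Gam μ hm hc hF y
  have hystar : ystar μ κ m c Feps τ = sInf {z | τ ≤ D z} := by
    simp only [ystar, prPi_Gam_self μ hm hc hF.mono.measurable, D]
  have hf : fQIQ μ κ m c Feps τ y = sInf {z | τ ≤ P z} := rfl
  have hDPy : D y = P y := (prPi_Gam_self μ hm hc hF.mono.measurable y).symm
  rw [hystar, ← not_le, hD.csInf_le_iff hτ, hDPy] at hy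
  rw [hf, hystar, ← not_le, hP.csInf_le_iff hτ, hP.csInf_le_iff hτ]
  exact ⟨hy, ((hD.csInf_le_iff hτ _).1 le_rfl).trans
    (integral_min_secondStageCdf_le_prPi_Gam μ hm hc hF y _)⟩

/-- fix `τ ∈ (0,1)`. If `y < y*_τ`, then `y < f(y) ≤ y*_τ`. -/
theorem stmt9
    {X1 X2 : Type*} [MeasurableSpace X1] [MeasurableSpace X2]
    [StandardBorelSpace X1] [StandardBorelSpace X2]
    (μ : Measure X1) [IsProbabilityMeasure μ]
    (κ : Kernel (X1 × ℝ) X2) [IsMarkovKernel κ]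
    (m c : X2 → ℝ) (hm : Measurable m) (hc : Measurable c)
    (Feps : ℝ → ℝ) (hF_mono : Monotone Feps)
    (hF_rc : ∀ x : ℝ, ContinuousWithinAt Feps (Ici x) x)
    (hF_bot : Tendsto Feps atBot (nhds 0)) (hF_top : Tendsto Feps atTop (nhds 1))
    (hF_mem : ∀ x : ℝ, Feps x ∈ Icc (0:ℝ) 1)
    (τ : ℝ) (hτ : τ ∈ Ioo (0:ℝ) 1) (y : ℝ) (hy : y < ystar μ κ m c Feps τ) :
    y < fQIQ μ κ m c Feps τ y ∧ fQIQ μ κ m c Feps τ y ≤ ystar μ κ m c Feps τ :=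
  stmt9_general μ κ m c hm hc Feps hF_mono hF_rc hF_bot hF_top τ hτ y hy
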